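/- Let β, r, θ, c > 0 with β > r, and suppose either (0 < c ≤ 1/3 and β c ≥ β - 2r) or (c > 1/3 and c ≥ β²/(27 r²)). If 0 < θ < (β - r)(1 + c), then the equation (β u - r)(1 + c u²)/u² = θ has exactly one solution u in the open interval (0,1); consequently the map V₂ has a unique positive fixed point (u, 1-u). -/

import Mathlib

/-!
Writing `Ψ₂(u) = β/u - r/u² + cβu - cr`, one finds for `0 < a < b`
`Ψ₂(b) - Ψ₂(a) = (b - a)(cβa²b² - βab + r(a + b))/(a²b²)`. By AM-GM, `r(a + b) > 2r√(ab)`, so with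
`t = √(ab) ≤ 1` the bracket exceeds `t·(cβt³ - βt + 2r)`, and each of the two parameter regimes makes
this cubic (the numerator of `u³Ψ₂'(u)`) nonnegative on `[0, 1]`. Hence `Ψ₂` is strictly increasing on
`(0, 1]`; since `Ψ₂(r/β) = 0` and `Ψ₂(1) = (β - r)(1 + c)`, the intermediate value theorem gives the
unique root. A positive fixed point of `V₂` must have `v = 1 - u` from the first coordinate and then
`Ψ₂(u) = θ` from the second.
-/

open Set

/-- The map `V₂(u,v) = (u(2-u) - u v, β u v + (1-r) v - θ u² v/(1 + c u²))`
(Holling type III toxin distribution). -/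
noncomputable def V2 (β r θ c : ℝ) (p : ℝ × ℝ) : ℝ × ℝ :=
  (p.1 * (2 - p.1) - p.1 * p.2,
   β * p.1 * p.2 + (1 - r) * p.2 - θ * p.1 ^ 2 * p.2 / (1 + c * p.1 ^ 2))

/-- `Ψ₂(u) = (βu - r)(1 + cu²)/u²`. -/
noncomputable def Psi2 (β r c u : ℝ) : ℝ := (β * u - r) * (1 + c * u ^ 2) / u ^ 2

section

variable {β r θ c : ℝ}

lemma cubic_nonneg_of_le_one_third (hβ : 0 ≤ β) (hc : 0 ≤ c) (hc3 : c ≤ 1 / 3)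
    (hβc : β - 2 * r ≤ β * c) {t : ℝ} (ht0 : 0 ≤ t) (ht1 : t ≤ 1) :
    0 ≤ c * β * t ^ 3 - β * t + 2 * r := by
  -- `(1 - t)(1 - c(t² + t + 1)) = 1 - t - c + ct³`
  have hfactor : 0 ≤ (1 - t) * (1 - c * (t ^ 2 + t + 1)) :=
    mul_nonneg (by linarith) (by nlinarith)
  nlinarith [mul_nonneg hβ hfactor]

lemma cubic_nonneg_of_sq_div_le (hβ : 0 ≤ β) (hr : 0 < r) (hβc : β ^ 2 / (27 * r ^ 2) ≤ c)
    {t : ℝ} (ht : 0 ≤ t) : 0 ≤ c * β * t ^ 3 - β * t + 2 * r := by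
  have h27 : β ^ 2 ≤ 27 * r ^ 2 * c := by
    rwa [div_le_iff₀ (by positivity), mul_comm] at hβc
  -- `(βt - 3r)²(βt + 6r) = β³t³ - 27r²βt + 54r³`
  have hscaled : 0 ≤ 27 * r ^ 2 * (c * β * t ^ 3 - β * t + 2 * r) := by
    nlinarith [mul_nonneg (sq_nonneg (β * t - 3 * r)) (by positivity : 0 ≤ β * t + 6 * r),
      mul_nonneg (mul_nonneg hβ (pow_nonneg ht 3)) (sub_nonneg.2 h27)]
  exact (mul_nonneg_iff_of_pos_left (by positivity)).1 hscaled

lemma Psi2_sub_Psi2 {a b : ℝ} (ha : a ≠ 0) (hb : b ≠ 0) :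
    Psi2 β r c b - Psi2 β r c a =
      (b - a) * (c * β * (a * b) ^ 2 - β * (a * b) + r * (a + b)) / (a * b) ^ 2 := by
  unfold Psi2
  field_simp
  ring

lemma Psi2_strictMonoOn (hr : 0 < r)
    (hcubic : ∀ t ∈ Icc (0 : ℝ) 1, 0 ≤ c * β * t ^ 3 - β * t + 2 * r) :
    StrictMonoOn (Psi2 β r c) (Ioc 0 1) := by
  rintro a ⟨ha, -⟩ b ⟨hb, hb1⟩ hab
  set t := Real.sqrt (a * b)
  have ht0 : 0 ≤ t := Real.sqrt_nonneg _
  have ht_sq : t ^ 2 = a * b := Real.sq_sqrt (by positivity)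
  have ht1 : t ≤ 1 := Real.sqrt_le_one.mpr (by nlinarith)
  have hamgm : 2 * t < a + b := by
    have : t < (a + b) / 2 :=
      (Real.sqrt_lt' (by linarith)).mpr (by nlinarith [mul_pos (sub_pos.2 hab) (sub_pos.2 hab)])
    linarith
  have hbracket : 0 < c * β * (a * b) ^ 2 - β * (a * b) + r * (a + b) := by
    rw [← ht_sq]
    nlinarith [mul_nonneg ht0 (hcubic t ⟨ht0, ht1⟩), mul_lt_mul_of_pos_left hamgm hr]
  rw [← sub_pos, Psi2_sub_Psi2 ha.ne' hb.ne']
  exact div_pos (mul_pos (sub_pos.2 hab) hbracket) (by positivity)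

lemma Psi2_div_eq_zero (hβ : β ≠ 0) : Psi2 β r c (r / β) = 0 := by
  simp [Psi2, mul_div_cancel₀ r hβ]

lemma Psi2_one : Psi2 β r c 1 = (β - r) * (1 + c) := by
  simp [Psi2]

lemma Psi2_continuousOn : ContinuousOn (Psi2 β r c) (Ioi 0) :=
  ContinuousOn.div (by fun_prop) (by fun_prop) fun _ hu => pow_ne_zero 2 (ne_of_gt hu)

lemma exists_Psi2_eq (hβ : 0 < β) (hr : 0 < r) (hβr : r < β) (hθ : 0 < θ)
    (hθub : θ < (β - r) * (1 + c)) : ∃ u ∈ Ioo (0 : ℝ) 1, Psi2 β r c u = θ := by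
  have hrβ : 0 < r / β := div_pos hr hβ
  have hrβ1 : r / β < 1 := (div_lt_one hβ).2 hβr
  have hcont : ContinuousOn (Psi2 β r c) (Icc (r / β) 1) :=
    Psi2_continuousOn.mono fun _ hu => hrβ.trans_le hu.1
  obtain ⟨u, hu, hΨ⟩ := intermediate_value_Ioo hrβ1.le hcont
    (by rw [Psi2_div_eq_zero hβ.ne', Psi2_one]; exact ⟨hθ, hθub⟩)
  exact ⟨u, ⟨hrβ.trans hu.1, hu.2⟩, hΨ⟩

lemma V2_eq_self_iff (hc : 0 ≤ c) {p : ℝ × ℝ} (hp1 : p.1 ≠ 0) (hp2 : p.2 ≠ 0) :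
    V2 β r θ c p = p ↔ p.2 = 1 - p.1 ∧ Psi2 β r c p.1 = θ := by
  obtain ⟨u, v⟩ := p
  have hD : 1 + c * u ^ 2 ≠ 0 := by positivity
  simp only [V2, Psi2, Prod.mk.injEq] at hp1 hp2 ⊢
  rw [div_eq_iff (pow_ne_zero 2 hp1)]
  constructor
  · rintro ⟨h1, h2⟩
    have hv : v = 1 - u := by
      have : u * (1 - u - v) = 0 := by linear_combination h1
      linarith [(mul_eq_zero.1 this).resolve_left hp1]
    refine ⟨hv, ?_⟩
    have h2' : θ * u ^ 2 * v = (β * u * v + (1 - r) * v - v) * (1 + c * u ^ 2) := by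
      rw [← div_eq_iff hD]
      linarith
    have : ((β * u - r) * (1 + c * u ^ 2) - θ * u ^ 2) * v = 0 := by linear_combination -h2'
    linarith [(mul_eq_zero.1 this).resolve_right hp2]
  · rintro ⟨rfl, hΨ⟩
    refine ⟨by ring, ?_⟩
    field_simp
    linear_combination hΨ

lemma positive_fixed_point_V2_iff (hc : 0 ≤ c) (hinj : InjOn (Psi2 β r c) (Ioo 0 1)) {u : ℝ}
    (hu : u ∈ Ioo (0 : ℝ) 1) (hΨ : Psi2 β r c u = θ) (p : ℝ × ℝ) :
    (0 < p.1 ∧ 0 < p.2 ∧ V2 β r θ c p = p) ↔ p = (u, 1 - u) := by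
  constructor
  · rintro ⟨hp1, hp2, hfix⟩
    obtain ⟨hv, hΨp⟩ := (V2_eq_self_iff hc hp1.ne' hp2.ne').1 hfix
    have hp1u : p.1 = u := hinj ⟨hp1, by linarith⟩ hu (hΨp.trans hΨ.symm)
    exact Prod.ext hp1u (by rw [hv, hp1u])
  · rintro rfl
    have hv : 0 < 1 - u := by linarith [hu.2]
    exact ⟨hu.1, hv, (V2_eq_self_iff hc hu.1.ne' hv.ne').2 ⟨rfl, hΨ⟩⟩

end

/-- If `β > r`, either (`0 < c ≤ 1/3` and `βc ≥ β - 2r`) or (`c > 1/3` and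
`c ≥ β²/(27r²)`), and `0 < θ < (β - r)(1 + c)`, then `Ψ₂(u) = θ` has exactly one
solution `u ∈ (0,1)`, and `V₂` has a unique positive fixed point, namely `(u, 1-u)`. -/
theorem unique_positive_fixed_point_V2 (β r θ c : ℝ) (hβ : 0 < β) (hr : 0 < r)
    (hθ : 0 < θ) (hc : 0 < c) (hβr : r < β)
    (hcase : (c ≤ 1 / 3 ∧ β - 2 * r ≤ β * c) ∨
      (1 / 3 < c ∧ β ^ 2 / (27 * r ^ 2) ≤ c))
    (hθub : θ < (β - r) * (1 + c)) :
    (∃! u : ℝ, u ∈ Set.Ioo (0 : ℝ) 1 ∧ Psi2 β r c u = θ) ∧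
    (∃! p : ℝ × ℝ, 0 < p.1 ∧ 0 < p.2 ∧ V2 β r θ c p = p) ∧
    (∀ u : ℝ, u ∈ Set.Ioo (0 : ℝ) 1 → Psi2 β r c u = θ →
      ∀ p : ℝ × ℝ, (0 < p.1 ∧ 0 < p.2 ∧ V2 β r θ c p = p) ↔ p = (u, 1 - u)) := by
  have hcubic : ∀ t ∈ Icc (0 : ℝ) 1, 0 ≤ c * β * t ^ 3 - β * t + 2 * r := by
    rintro t ⟨ht0, ht1⟩
    rcases hcase with ⟨hc3, hβc⟩ | ⟨-, hβc⟩
    · exact cubic_nonneg_of_le_one_third hβ.le hc.le hc3 hβc ht0 ht1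
    · exact cubic_nonneg_of_sq_div_le hβ.le hr hβc ht0
  have hinj : InjOn (Psi2 β r c) (Ioo 0 1) :=
    ((Psi2_strictMonoOn hr hcubic).injOn).mono Ioo_subset_Ioc_self
  obtain ⟨u, hu, hΨ⟩ := exists_Psi2_eq hβ hr hβr hθ hθub
  have hfixed := positive_fixed_point_V2_iff hc.le hinj hu hΨ
  refine ⟨⟨u, ⟨hu, hΨ⟩, fun w ⟨hw, hΨw⟩ => hinj hw hu (hΨw.trans hΨ.symm)⟩,
    ⟨(u, 1 - u), (hfixed _).2 rfl, fun q hq => (hfixed q).1 hq⟩,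
    fun w hw hΨw => positive_fixed_point_V2_iff hc.le hinj hw hΨw⟩
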